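/- arXiv:1709.06037 — 5 statements merged into one kernel-verified Lean document; each statement's English description precedes it below -/
import Mathlib

section
/- Let K ⊂ ℝ^d be a nonempty compact convex set, let E = Ex(K) denote its set of extreme points, and let γ : ℝ^d → ℝ be a convex function of the form γ(h) = ψ(‖h‖²) for some ψ : [0,∞) → ℝ. Assume that the symmetry group of E acts transitively on E, i.e. for all u, w ∈ E there is a linear isometry M of ℝ^d with M(E) = E and M u = w. Let λ be a Borel probability measure on ℝ^d with λ(E) = 1 that is invariant under every linear isometry M of ℝ^d satisfying M(E) = E (i.e. the pushforward of λ under M equals λ). Then for every x ∈ K one has ∫ γ(x − y) λ(dy) ≤ ∫∫ γ(u − v) λ(du) λ(dv). -/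
/-!
The potential `f x = ∫ γ (x - y) dλ(y)` is convex in `x`. Because `γ` is radial and `λ` is
invariant under the symmetries of `E`, transitivity makes `f` constant on `E`; as `λ` lives on
`E`, the double integral equals this constant. By Krein–Milman `K` is the closed convex hull
of `E`, and a continuous convex function is bounded on a closed convex hull by its bound on
the generating set.
-/

open MeasureTheory Set

lemma ConvexOn.continuous {E : Type*} [NormedAddCommGroup E] [NormedSpace ℝ E]
    [FiniteDimensional ℝ E] {f : E → ℝ} (hf : ConvexOn ℝ univ f) : Continuous f :=
  continuousOn_univ.1 (hf.continuousOn isOpen_univ)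

lemma ConvexOn.le_of_mem_closure_convexHull {E : Type*} [AddCommGroup E] [Module ℝ E]
    [TopologicalSpace E] {f : E → ℝ} (hf : ConvexOn ℝ univ f) (hfc : Continuous f)
    {s : Set E} {c : ℝ} (hs : ∀ y ∈ s, f y ≤ c) {x : E} (hx : x ∈ closure (convexHull ℝ s)) :
    f x ≤ c := by
  have hhull : convexHull ℝ s ⊆ {z | f z ≤ c} := fun z hz ↦ by
    obtain ⟨y, hy, hfy⟩ := hf.exists_ge_of_mem_convexHull (subset_univ s) hz
    exact hfy.trans (hs y hy)
  exact closure_minimal hhull (isClosed_le hfc continuous_const) hx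

lemma convexOn_integral {α E : Type*} [MeasurableSpace α] [AddCommGroup E] [Module ℝ E]
    {μ : Measure α} {s : Set E} {F : E → α → ℝ} (hs : Convex ℝ s)
    (hF : ∀ y, ConvexOn ℝ s (F · y)) (hint : ∀ x ∈ s, Integrable (F x) μ) :
    ConvexOn ℝ s (fun x ↦ ∫ y, F x y ∂μ) := by
  refine ⟨hs, fun x hx z hz a b ha hb hab ↦ ?_⟩
  have hcomb : Integrable (fun y ↦ a * F x y + b * F z y) μ :=
    ((hint x hx).const_mul a).add ((hint z hz).const_mul b)
  calc ∫ y, F (a • x + b • z) y ∂μ ≤ ∫ y, (a * F x y + b * F z y) ∂μ :=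
        integral_mono (hint _ (hs hx hz ha hb hab)) hcomb
          fun y ↦ (hF y).2 hx hz ha hb hab
    _ = a * ∫ y, F x y ∂μ + b * ∫ y, F z y ∂μ := by
        rw [integral_add ((hint x hx).const_mul a) ((hint z hz).const_mul b),
          integral_const_mul, integral_const_mul]

lemma mem_ae_of_subset_of_prob_eq_one {α : Type*} [MeasurableSpace α] {μ : Measure α}
    [IsProbabilityMeasure μ] {s t : Set α} (ht : MeasurableSet t) (hst : s ⊆ t)
    (hs : μ s = 1) : ∀ᵐ x ∂μ, x ∈ t :=
  (mem_ae_iff_prob_eq_one ht).2 (le_antisymm prob_le_one (hs ▸ measure_mono hst))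

lemma Continuous.integrable_of_ae_mem_compact {X : Type*} [TopologicalSpace X] [T2Space X]
    [MeasurableSpace X] [OpensMeasurableSpace X] {μ : Measure X} [IsFiniteMeasureOnCompacts μ]
    {K : Set X} (hK : IsCompact K) (hμK : ∀ᵐ x ∂μ, x ∈ K) {g : X → ℝ} (hg : Continuous g) :
    Integrable g μ := by
  rw [← Measure.restrict_eq_self_of_ae_mem hμK]
  exact hg.continuousOn.integrableOn_compact hK

lemma integral_comp_apply_sub_of_map_eq {E : Type*} [NormedAddCommGroup E] [NormedSpace ℝ E]
    [MeasurableSpace E] [BorelSpace E] {μ : Measure E} {γ : E → ℝ} (M : E ≃ₗᵢ[ℝ] E)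
    (hγ : ∀ h, γ (M h) = γ h) (hμ : μ.map M = μ) (u : E) :
    ∫ y, γ (M u - y) ∂μ = ∫ y, γ (u - y) ∂μ := by
  calc ∫ y, γ (M u - y) ∂μ = ∫ y, γ (M u - y) ∂μ.map M := by rw [hμ]
    _ = ∫ z, γ (M u - M z) ∂μ := M.toHomeomorph.measurableEmbedding.integral_map _
    _ = ∫ y, γ (u - y) ∂μ := by simp only [← M.map_sub, hγ]

theorem stmt_0_general (d : ℕ) (K : Set (EuclideanSpace ℝ (Fin d)))
    (hKcpt : IsCompact K) (hKconv : Convex ℝ K)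
    (ψ : ℝ → ℝ) (γ : EuclideanSpace ℝ (Fin d) → ℝ)
    (hγψ : ∀ h, γ h = ψ (‖h‖ ^ 2))
    (hγconv : ConvexOn ℝ Set.univ γ)
    (E : Set (EuclideanSpace ℝ (Fin d)))
    (hE : E = Set.extremePoints ℝ K)
    (htrans : ∀ u ∈ E, ∀ w ∈ E,
      ∃ M : EuclideanSpace ℝ (Fin d) ≃ₗᵢ[ℝ] EuclideanSpace ℝ (Fin d),
        ⇑M '' E = E ∧ M u = w)
    (μ : Measure (EuclideanSpace ℝ (Fin d))) [IsProbabilityMeasure μ]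
    (hμE : μ E = 1)
    (hμinv : ∀ M : EuclideanSpace ℝ (Fin d) ≃ₗᵢ[ℝ] EuclideanSpace ℝ (Fin d),
      ⇑M '' E = E → μ.map M = μ) :
    ∀ x ∈ K, ∫ y, γ (x - y) ∂μ ≤ ∫ u, ∫ v, γ (u - v) ∂μ ∂μ := by
  intro x hx
  set f := fun x ↦ ∫ y, γ (x - y) ∂μ
  have hμK : ∀ᵐ y ∂μ, y ∈ K := mem_ae_of_subset_of_prob_eq_one hKcpt.isClosed.measurableSet
    (hE ▸ extremePoints_subset) hμE
  have hint : ∀ x, Integrable (fun y ↦ γ (x - y)) μ := fun x ↦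
    (hγconv.continuous.comp (continuous_const.sub continuous_id)).integrable_of_ae_mem_compact
      hKcpt hμK
  have hf : ConvexOn ℝ univ f := convexOn_integral convex_univ
    (fun y ↦ by simpa [Function.comp_def, sub_eq_neg_add] using hγconv.translate_right (-y))
    fun x _ ↦ hint x
  obtain ⟨u₀, hu₀⟩ : E.Nonempty := nonempty_of_measure_ne_zero (hμE ▸ one_ne_zero)
  have hconst : ∀ w ∈ E, f w = f u₀ := by
    intro w hw
    obtain ⟨M, hME, rfl⟩ := htrans u₀ hu₀ w hw
    exact integral_comp_apply_sub_of_map_eq M (fun h ↦ by rw [hγψ, hγψ, M.norm_map])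
      (hμinv M hME) u₀
  have hdouble : ∫ u, f u ∂μ = f u₀ := integral_eq_const <|
    mem_ae_of_subset_of_prob_eq_one (isClosed_eq hf.continuous continuous_const).measurableSet
      hconst hμE
  rw [hdouble]
  exact hf.le_of_mem_closure_convexHull hf.continuous (fun w hw ↦ (hconst w hw).le)
    (by rwa [hE, closure_convexHull_extremePoints hKcpt hKconv])

theorem stmt_0 (d : ℕ) (K : Set (EuclideanSpace ℝ (Fin d)))
    (hKcpt : IsCompact K) (hKconv : Convex ℝ K) (hKne : K.Nonempty)
    (ψ : ℝ → ℝ) (γ : EuclideanSpace ℝ (Fin d) → ℝ)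
    (hγψ : ∀ h, γ h = ψ (‖h‖ ^ 2))
    (hγconv : ConvexOn ℝ Set.univ γ)
    (E : Set (EuclideanSpace ℝ (Fin d)))
    (hE : E = Set.extremePoints ℝ K)
    (htrans : ∀ u ∈ E, ∀ w ∈ E,
      ∃ M : EuclideanSpace ℝ (Fin d) ≃ₗᵢ[ℝ] EuclideanSpace ℝ (Fin d),
        ⇑M '' E = E ∧ M u = w)
    (μ : Measure (EuclideanSpace ℝ (Fin d))) [IsProbabilityMeasure μ]
    (hμE : μ E = 1)
    (hμinv : ∀ M : EuclideanSpace ℝ (Fin d) ≃ₗᵢ[ℝ] EuclideanSpace ℝ (Fin d),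
      ⇑M '' E = E → μ.map M = μ) :
    ∀ x ∈ K, ∫ y, γ (x - y) ∂μ ≤ ∫ u, ∫ v, γ (u - v) ∂μ ∂μ :=
  stmt_0_general d K hKcpt hKconv ψ γ hγψ hγconv E hE htrans μ hμE hμinv
end

section
/- Let ψ : [0,∞) → ℝ be bounded from below. Then ψ is negative definite on the additive semigroup ([0,∞),+) if and only if ψ is n-alternating for every n ≥ 1. -/
/-!
Write `δ_t = single t 1` for the Dirac mass at `t` in the convolution algebra `ℝ[ℝ]` and pair
its elements with the translates `ψ (x + ·)`. The alternating sum defining `n`-alternation is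
the pairing with `∏ᵢ (δ_0 - δ_{tᵢ})`.

(⇒) Negative definiteness says that the pairing with `μ * μ` is `≤ 0` whenever `μ` has total
mass `0`, e.g. for `μ = ∏ᵢ (δ_0 - δ_{tᵢ})`. A function that is bounded below and whose second
differences of step `t` are `≤ 0` is nondecreasing in steps of `t`. Applied to `ψ` this gives
monotonicity and bounded increments, hence bounded iterated differences; applied to iterated
differences of `ψ` it strips the factors of `∏ᵢ (δ_0 - δ_{tᵢ})²` one at a time.

(⇐) Expanding `1 = ((1 - δ_{s_k}) + δ_{s_k}) ^ N` in Bernstein polynomials at every point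
`s_k` writes `N² ∑ aᵢ aⱼ ψ(sᵢ + sⱼ) + N ∑ aᵢ² (ψ(sᵢ) - ψ(2sᵢ))` as a combination, with
weights `(∑ aᵢ gᵢ)² ≥ 0`, of translated pairings with products of differences. These are
`≤ 0` by alternation, except for the term without differences, whose weight is
`(N ∑ aᵢ)² = 0`. Letting `N → ∞` gives negative definiteness.
-/

/-- A function `f : [0,∞) → ℝ` (modeled as `ℝ → ℝ`, with all arguments nonnegative)
is `n`-alternating if `∑_{A ⊆ {1,…,n}} (−1)^{|A|} f(s + ∑_{i∈A} sᵢ) ≤ 0`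
for all `s, s₁, …, sₙ ≥ 0`. -/
def NAlternating (n : ℕ) (f : ℝ → ℝ) : Prop :=
  ∀ s : ℝ, 0 ≤ s → ∀ t : Fin n → ℝ, (∀ i, 0 ≤ t i) →
    ∑ A : Finset (Fin n), (-1 : ℝ) ^ A.card * f (s + ∑ i ∈ A, t i) ≤ 0

/-- `ψ : [0,∞) → ℝ` is negative definite on the additive semigroup `([0,∞), +)`:
for all `n`, all `s₁,…,sₙ ≥ 0` and `a₁,…,aₙ ∈ ℝ` with `∑ aᵢ = 0`,
`∑ᵢ∑ⱼ aᵢ aⱼ ψ(sᵢ + sⱼ) ≤ 0`. -/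
def NegDefHalfLine (ψ : ℝ → ℝ) : Prop :=
  ∀ (n : ℕ) (s : Fin n → ℝ), (∀ i, 0 ≤ s i) → ∀ a : Fin n → ℝ,
    ∑ i, a i = 0 → ∑ i, ∑ j, a i * a j * ψ (s i + s j) ≤ 0

open Finset AddMonoidAlgebra

/-- `shiftEval ψ x μ = ∑ y, μ.coeff y * ψ (x + y)`: the translate `ψ (x + ·)` integrated against
the finitely supported measure `μ`. -/
noncomputable def shiftEval (ψ : ℝ → ℝ) (x : ℝ) : AddMonoidAlgebra ℝ ℝ →ₗ[ℝ] ℝ :=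
  (AddMonoidAlgebra.basis ℝ ℝ).constr ℝ fun y => ψ (x + y)

section ShiftEval

variable (ψ : ℝ → ℝ) (x : ℝ)

@[simp]
lemma shiftEval_single (y c : ℝ) : shiftEval ψ x (single y c) = c * ψ (x + y) := by
  have : single y c = c • AddMonoidAlgebra.basis ℝ ℝ y := by simp
  rw [this, map_smul, shiftEval, Module.Basis.constr_basis, smul_eq_mul]

@[simp]
lemma shiftEval_one : shiftEval ψ x 1 = ψ x := by
  simp [AddMonoidAlgebra.one_def]

lemma shiftEval_single_mul (t : ℝ) (a : AddMonoidAlgebra ℝ ℝ) :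
    shiftEval ψ x (single t 1 * a) = shiftEval ψ (x + t) a := by
  induction a using AddMonoidAlgebra.induction_linear with
  | zero => simp
  | add a b ha hb => rw [mul_add, map_add, map_add, ha, hb]
  | single y c => simp [single_mul_single, add_assoc]

lemma shiftEval_one_sub_single_mul (t : ℝ) (a : AddMonoidAlgebra ℝ ℝ) :
    shiftEval ψ x ((1 - single t 1) * a) = shiftEval ψ x a - shiftEval ψ (x + t) a := by
  rw [sub_mul, one_mul, map_sub, shiftEval_single_mul]

end ShiftEval

lemma AddMonoidAlgebra.prod_one_sub_single {k G ι : Type*} [CommRing k] [AddCommMonoid G]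
    [Fintype ι] (t : ι → G) :
    ∏ i, (1 - single (t i) 1 : AddMonoidAlgebra k G) =
      ∑ S : Finset ι, single (∑ i ∈ S, t i) ((-1) ^ #S) := by
  simp_rw [sub_eq_add_neg, ← single_neg, prod_one_add, powerset_univ, prod_single, prod_const]

lemma shiftEval_prod_one_sub_single (ψ : ℝ → ℝ) (x : ℝ) {ι : Type*} [Fintype ι] (t : ι → ℝ) :
    shiftEval ψ x (∏ i, (1 - single (t i) 1)) =
      ∑ S : Finset ι, (-1) ^ #S * ψ (x + ∑ i ∈ S, t i) := by
  simp [prod_one_sub_single]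

lemma nAlternating_iff {n : ℕ} {ψ : ℝ → ℝ} :
    NAlternating n ψ ↔ ∀ x, 0 ≤ x → ∀ t : Fin n → ℝ, (∀ i, 0 ≤ t i) →
      shiftEval ψ x (∏ i, (1 - single (t i) 1)) ≤ 0 := by
  simp only [NAlternating, shiftEval_prod_one_sub_single]

lemma le_add_of_sub_sub_nonpos {f : ℝ → ℝ} {C t : ℝ} (hC : ∀ x, 0 ≤ x → C ≤ f x) (ht : 0 ≤ t)
    (hf : ∀ x, 0 ≤ x → f x - f (x + t) - (f (x + t) - f (x + t + t)) ≤ 0) {s : ℝ} (hs : 0 ≤ s) :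
    f s ≤ f (s + t) := by
  by_contra! hlt
  set δ := f s - f (s + t)
  have hδ : 0 < δ := sub_pos.2 hlt
  have descent (K : ℕ) :
      δ ≤ f (s + K * t) - f (s + K * t + t) ∧ f (s + K * t) + K * δ ≤ f s := by
    induction K with
    | zero => simp [δ]
    | succ K ih =>
      have := hf (s + K * t) (by positivity)
      rw [Nat.cast_succ, add_one_mul, ← add_assoc]
      constructor <;> linarith
  obtain ⟨K, hK⟩ := exists_nat_gt ((f s - C) / δ)
  rw [div_lt_iff₀ hδ] at hK
  linarith [(descent K).2, hC (s + K * t) (by positivity)]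

namespace NegDefHalfLine

variable {ψ : ℝ → ℝ} (hψ : NegDefHalfLine ψ) {m : ℝ} (hm : ∀ x, 0 ≤ x → m ≤ ψ x)
include hψ

lemma sum_sum_le_zero {ι : Type*} [Fintype ι] {s : ι → ℝ} (hs : ∀ i, 0 ≤ s i) {a : ι → ℝ}
    (ha : ∑ i, a i = 0) :
    ∑ i, ∑ j, a i * a j * ψ (s i + s j) ≤ 0 := by
  let e := Fintype.equivFin ι
  have := hψ _ (s ∘ e.symm) (fun _ => hs _) (a ∘ e.symm) (by simpa [e.symm.sum_comp] using ha)
  have inner (i : ι) : ∑ j, a i * a j * ψ (s i + s j) =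
      ∑ l, a i * a (e.symm l) * ψ (s i + s (e.symm l)) := (e.symm.sum_comp _).symm
  rw [← e.symm.sum_comp]
  simp only [inner]
  exact this

lemma shiftEval_prod_sq_nonpos {ι : Type*} [Fintype ι] [Nonempty ι] {t : ι → ℝ}
    (ht : ∀ i, 0 ≤ t i) {x : ℝ} (hx : 0 ≤ x) :
    shiftEval ψ x ((∏ i, (1 - single (t i) 1)) ^ 2) ≤ 0 := by
  have key := hψ.sum_sum_le_zero (s := fun S : Finset ι => x / 2 + ∑ i ∈ S, t i)
    (fun S => by have := sum_nonneg fun i (_ : i ∈ S) => ht i; positivity)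
    (a := fun S => (-1) ^ #S)
    (by
      rw [← powerset_univ]
      exact_mod_cast sum_powerset_neg_one_pow_card_of_nonempty (univ_nonempty (α := ι)))
  convert key using 1
  simp only [prod_one_sub_single, sq, sum_mul_sum, single_mul_single, map_sum, shiftEval_single]
  refine sum_congr rfl fun S _ => sum_congr rfl fun T _ => ?_
  ring_nf

lemma sub_sub_nonpos {x t : ℝ} (hx : 0 ≤ x) (ht : 0 ≤ t) :
    ψ x - ψ (x + t) - (ψ (x + t) - ψ (x + t + t)) ≤ 0 := by
  simpa [sq, shiftEval_one_sub_single_mul, add_assoc] using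
    hψ.shiftEval_prod_sq_nonpos (ι := Unit) (t := fun _ => t) (fun _ => ht) hx

include hm

lemma monotoneOn : MonotoneOn ψ (Set.Ici 0) := by
  intro x hx y hy hxy
  simpa using le_add_of_sub_sub_nonpos hm (sub_nonneg.2 hxy)
    (fun z hz => hψ.sub_sub_nonpos hz (sub_nonneg.2 hxy)) (Set.mem_Ici.1 hx)

lemma apply_add_sub_apply_le {v x : ℝ} (hv : 0 ≤ v) (hx : 0 ≤ x) :
    ψ (x + v) - ψ x ≤ ψ (v + v) - m := by
  have short (y : ℝ) (hy : 0 ≤ y) (hyv : y ≤ v) : ψ (y + v) - ψ y ≤ ψ (v + v) - m := by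
    linarith [hψ.monotoneOn hm (Set.mem_Ici.2 (by positivity)) (Set.mem_Ici.2 (by positivity))
      (by linarith : y + v ≤ v + v), hm y hy]
  rcases hv.eq_or_lt with rfl | hv
  · simpa using hm 0 le_rfl
  -- increments over steps of length `v` decrease, so it suffices to treat `x ≤ v`
  have reduce (K : ℕ) : ∀ y, 0 ≤ y → y ≤ K * v → ψ (y + v) - ψ y ≤ ψ (v + v) - m := by
    induction K with
    | zero => exact fun y hy hyK => short y hy (by simp at hyK; linarith)
    | succ K ih =>
      intro y hy hyK
      by_cases hyv : y ≤ v
      · exact short y hy hyv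
      have concave := hψ.sub_sub_nonpos (x := y - v) (by linarith) hv.le
      have previous := ih (y - v) (by linarith) (by push_cast at hyK; linarith)
      simp only [sub_add_cancel] at concave previous
      linarith
  obtain ⟨K, hK⟩ := exists_nat_ge (x / v)
  exact reduce K x hx (by rwa [div_le_iff₀ hv] at hK)

lemma exists_abs_shiftEval_prod_le {ι : Type*} {t : ι → ℝ} (ht : ∀ i, 0 ≤ t i) {S : Finset ι}
    (hS : S.Nonempty) :
    ∃ C, ∀ x, 0 ≤ x → |shiftEval ψ x (∏ i ∈ S, (1 - single (t i) 1))| ≤ C := by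
  induction hS using Finset.Nonempty.cons_induction with
  | singleton i =>
    refine ⟨ψ (t i + t i) - m, fun x hx => abs_le.2 ⟨?_, ?_⟩⟩ <;>
    simp only [prod_singleton, map_sub, shiftEval_one, shiftEval_single, one_mul]
    · linarith [hψ.apply_add_sub_apply_le hm (ht i) hx]
    · linarith [hψ.monotoneOn hm (Set.mem_Ici.2 hx) (Set.mem_Ici.2 (add_nonneg hx (ht i)))
        (le_add_of_nonneg_right (ht i)), hψ.apply_add_sub_apply_le hm (ht i) hx]
  | cons i S hi hS ih =>
    obtain ⟨C, hC⟩ := ih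
    refine ⟨C + C, fun x hx => ?_⟩
    rw [prod_cons, shiftEval_one_sub_single_mul]
    exact (abs_sub _ _).trans (add_le_add (hC x hx) (hC _ (add_nonneg hx (ht i))))

lemma exists_le_shiftEval_prod {ι : Type*} [Fintype ι] {t : ι → ℝ} (ht : ∀ i, 0 ≤ t i) :
    ∃ C, ∀ x, 0 ≤ x → C ≤ shiftEval ψ x (∏ i, (1 - single (t i) 1)) := by
  cases isEmpty_or_nonempty ι
  · exact ⟨m, by simpa using hm⟩
  · obtain ⟨C, hC⟩ := hψ.exists_abs_shiftEval_prod_le hm ht univ_nonempty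
    exact ⟨-C, fun x hx => neg_le_of_abs_le (hC x hx)⟩

/-- Induction on `n`: in the step, the induction hypothesis with `A 0` moved into `B` says that
the second differences of step `A 0` are `≤ 0`, so `le_add_of_sub_sub_nonpos` applies. -/
lemma shiftEval_prod_mul_prod_sq_nonpos (n : ℕ) (A : Fin n → ℝ) {κ : Type} [Fintype κ]
    (B : κ → ℝ) (hA : ∀ i, 0 ≤ A i) (hB : ∀ k, 0 ≤ B k) (hne : n ≠ 0 ∨ Nonempty κ) {x : ℝ}
    (hx : 0 ≤ x) :
    shiftEval ψ x ((∏ i, (1 - single (A i) 1)) * (∏ k, (1 - single (B k) 1)) ^ 2) ≤ 0 := by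
  induction n generalizing κ x with
  | zero =>
    have := hne.resolve_left (by simp)
    simpa using hψ.shiftEval_prod_sq_nonpos hB hx
  | succ n ih =>
    set f := fun y => shiftEval ψ y
      ((∏ i : Fin n, (1 - single (A i.succ) 1)) * (∏ k, (1 - single (B k) 1)) ^ 2)
    have hsecond (y : ℝ) (hy : 0 ≤ y) :
        f y - f (y + A 0) - (f (y + A 0) - f (y + A 0 + A 0)) ≤ 0 := by
      have := ih (fun i => A i.succ) (κ := Option κ) (fun o => o.elim (A 0) B) (fun i => hA _)
        (by rintro (_ | k); exacts [hA 0, hB k]) (Or.inr inferInstance) hy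
      simp only [f, ← shiftEval_one_sub_single_mul]
      convert this using 2
      simp only [Fintype.prod_option, Option.elim_none, Option.elim_some]
      ring
    obtain ⟨C, hC⟩ := hψ.exists_le_shiftEval_prod hm
      (t := Sum.elim (fun i : Fin n => A i.succ) (Sum.elim B B))
      (by rintro (i | k | k); exacts [hA _, hB k, hB k])
    have hbdd (y : ℝ) (hy : 0 ≤ y) : C ≤ f y := by
      simpa [f, Fintype.prod_sum_type, sq, mul_assoc] using hC y hy
    rw [Fin.prod_univ_succ, mul_assoc, shiftEval_one_sub_single_mul, sub_nonpos]
    exact le_add_of_sub_sub_nonpos hbdd (hA 0) hsecond hx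

lemma nAlternating {n : ℕ} (hn : 1 ≤ n) : NAlternating n ψ := by
  rw [nAlternating_iff]
  intro x hx t ht
  simpa using hψ.shiftEval_prod_mul_prod_sq_nonpos hm n t (κ := Empty) Empty.elim ht
    (fun k => k.elim) (Or.inl (by omega)) hx

end NegDefHalfLine

section Bernstein

open Polynomial

variable {A : Type*} [CommRing A] [Algebra ℝ A]

lemma sum_aeval_bernsteinPolynomial (u : A) (N : ℕ) :
    ∑ ν ∈ range (N + 1), aeval u (bernsteinPolynomial ℝ N ν) = 1 := by
  simpa using congrArg (aeval u) (bernsteinPolynomial.sum ℝ N)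

lemma sum_smul_aeval_bernsteinPolynomial (u : A) (N : ℕ) :
    ∑ ν ∈ range (N + 1), (ν : ℝ) • aeval u (bernsteinPolynomial ℝ N ν) = (N : ℝ) • u := by
  simpa [Nat.cast_smul_eq_nsmul] using congrArg (aeval u) (bernsteinPolynomial.sum_smul ℝ N)

lemma sum_sq_smul_aeval_bernsteinPolynomial (u : A) (N : ℕ) :
    ∑ ν ∈ range (N + 1), ((ν : ℝ) ^ 2) • aeval u (bernsteinPolynomial ℝ N ν) =
      ((N : ℝ) ^ 2) • u ^ 2 + (N : ℝ) • (u - u ^ 2) := by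
  have cast_mul_pred (n : ℕ) : ((n * (n - 1) : ℕ) : ℝ) = (n : ℝ) ^ 2 - n := by
    cases n <;> push_cast <;> ring
  have h := congrArg (aeval u) (bernsteinPolynomial.sum_mul_smul ℝ N)
  simp only [map_sum, map_nsmul, map_pow, aeval_X] at h
  simp only [← Nat.cast_smul_eq_nsmul ℝ, cast_mul_pred] at h
  have split (ν : ℕ) : ((ν : ℝ) ^ 2) • aeval u (bernsteinPolynomial ℝ N ν) =
      ((ν : ℝ) ^ 2 - ν) • aeval u (bernsteinPolynomial ℝ N ν) +
        (ν : ℝ) • aeval u (bernsteinPolynomial ℝ N ν) := by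
    rw [← add_smul, sub_add_cancel]
  rw [sum_congr rfl fun ν _ => split ν, sum_add_distrib, h, sum_smul_aeval_bernsteinPolynomial,
    sub_smul, smul_sub]
  abel

variable {ι : Type*} [Fintype ι] [DecidableEq ι]

lemma sum_mul_smul_prod_aeval_bernsteinPolynomial (u : ι → A) (N : ℕ) (i j : ι) :
    ∑ g ∈ Fintype.piFinset fun _ => range (N + 1),
        ((g i : ℝ) * g j) • ∏ k, aeval (u k) (bernsteinPolynomial ℝ N (g k)) =
      ((N : ℝ) ^ 2) • (u i * u j) + if i = j then (N : ℝ) • (u i - u i ^ 2) else 0 := by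
  have weight (g : ι → ℕ) : (g i : ℝ) * g j =
      ∏ k, (if k = i then (g k : ℝ) else 1) * (if k = j then (g k : ℝ) else 1) := by
    rw [prod_mul_distrib, prod_ite_eq', prod_ite_eq']
    simp
  simp_rw [weight, ← prod_smul]
  rw [← prod_univ_sum (fun _ => range (N + 1))
    (fun k ρ => ((if k = i then (ρ : ℝ) else 1) * (if k = j then (ρ : ℝ) else 1)) •
      aeval (u k) (bernsteinPolynomial ℝ N ρ))]
  split_ifs with hij
  · subst hij
    rw [prod_eq_single i (fun k _ hk => by simp [hk, sum_aeval_bernsteinPolynomial]) (by simp)]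
    simp [← sq, sum_sq_smul_aeval_bernsteinPolynomial]
  · rw [prod_eq_mul i j hij (fun k _ hk => by simp [hk.1, hk.2, sum_aeval_bernsteinPolynomial])
      (by simp) (by simp)]
    simp [hij, Ne.symm hij, sum_smul_aeval_bernsteinPolynomial, smul_smul, sq]

lemma sum_sq_smul_prod_aeval_bernsteinPolynomial (u : ι → A) (a : ι → ℝ) (N : ℕ) :
    ∑ g ∈ Fintype.piFinset fun _ => range (N + 1),
        (∑ i, a i * g i) ^ 2 • ∏ k, aeval (u k) (bernsteinPolynomial ℝ N (g k)) =
      ((N : ℝ) ^ 2) • (∑ i, a i • u i) ^ 2 + (N : ℝ) • ∑ i, a i ^ 2 • (u i - u i ^ 2) := by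
  calc _ = ∑ i, ∑ j, (a i * a j) • ∑ g ∈ Fintype.piFinset fun _ => range (N + 1),
        ((g i : ℝ) * g j) • ∏ k, aeval (u k) (bernsteinPolynomial ℝ N (g k)) := by
        simp_rw [smul_sum, smul_smul, sq, sum_mul_sum, sum_smul]
        rw [sum_comm]
        refine sum_congr rfl fun i _ => ?_
        rw [sum_comm]
        refine sum_congr rfl fun j _ => sum_congr rfl fun g _ => ?_
        ring_nf
    _ = _ := by
        simp_rw [sum_mul_smul_prod_aeval_bernsteinPolynomial, smul_add, sum_add_distrib, smul_ite,
          smul_zero, sum_ite_eq, mem_univ, if_true, sq, sum_mul_sum, smul_sum, smul_smul,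
          smul_mul_smul_comm]
        congr 1
        · refine sum_congr rfl fun i _ => sum_congr rfl fun j _ => ?_
          rw [smul_smul]
          ring_nf
        · refine sum_congr rfl fun i _ => ?_
          ring_nf

end Bernstein

section Backward

open Polynomial

variable {ψ : ℝ → ℝ} (hψ : ∀ n, 1 ≤ n → NAlternating n ψ)
include hψ

lemma shiftEval_prod_nonpos_of_nAlternating {ι : Type*} [Fintype ι] [Nonempty ι] {t : ι → ℝ}
    (ht : ∀ i, 0 ≤ t i) {x : ℝ} (hx : 0 ≤ x) :
    shiftEval ψ x (∏ i, (1 - single (t i) 1)) ≤ 0 := by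
  let e := Fintype.equivFin ι
  rw [← e.symm.prod_comp]
  exact nAlternating_iff.1 (hψ _ Fintype.card_pos) x hx _ fun _ => ht _

lemma shiftEval_prod_pow_nonpos_of_nAlternating {ι : Type*} [Fintype ι] {t : ι → ℝ}
    (ht : ∀ i, 0 ≤ t i) {k : ι → ℕ} (hk : ∃ i, k i ≠ 0) {x : ℝ} (hx : 0 ≤ x) :
    shiftEval ψ x (∏ i, (1 - single (t i) 1) ^ k i) ≤ 0 := by
  obtain ⟨i, hi⟩ := hk
  have : Nonempty ((i : ι) × Fin (k i)) := ⟨⟨i, 0, Nat.pos_of_ne_zero hi⟩⟩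
  simpa [Fintype.prod_sigma] using
    shiftEval_prod_nonpos_of_nAlternating hψ (t := fun p : (i : ι) × Fin (k i) => t p.1)
      (fun _ => ht _) hx

lemma shiftEval_prod_aeval_bernsteinPolynomial_nonpos {ι : Type*} [Fintype ι] {s : ι → ℝ}
    (hs : ∀ i, 0 ≤ s i) {N : ℕ} {g : ι → ℕ} (hg : ∀ k, g k ≤ N) (hgN : ∃ k, g k ≠ N) :
    shiftEval ψ 0 (∏ k, aeval (single (s k) 1) (bernsteinPolynomial ℝ N (g k))) ≤ 0 := by
  have expand :
      ∏ k, aeval (single (s k) 1 : AddMonoidAlgebra ℝ ℝ) (bernsteinPolynomial ℝ N (g k)) =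
        (∏ k, N.choose (g k)) •
          (single (∑ k, g k • s k) 1 * ∏ k, (1 - single (s k) 1) ^ (N - g k)) := by
    simp only [bernsteinPolynomial, map_mul, map_natCast, map_pow, map_sub, map_one, aeval_X,
      prod_mul_distrib, single_pow, prod_single, one_pow, prod_const_one]
    rw [← Nat.cast_prod, mul_assoc, ← nsmul_eq_mul]
  obtain ⟨k, hk⟩ := hgN
  rw [expand, map_nsmul, shiftEval_single_mul, zero_add, nsmul_eq_mul]
  exact mul_nonpos_of_nonneg_of_nonpos (by positivity)
    (shiftEval_prod_pow_nonpos_of_nAlternating hψ hs ⟨k, by have := hg k; omega⟩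
      (sum_nonneg fun k _ => nsmul_nonneg (hs k) _))

lemma negDefHalfLine_of_nAlternating : NegDefHalfLine ψ := by
  intro n s hs a ha
  set Q := ∑ i, ∑ j, a i * a j * ψ (s i + s j)
  set c := ∑ i, a i ^ 2 * (ψ (s i) - ψ (s i + s i))
  have bound (N : ℕ) : (N : ℝ) ^ 2 * Q + N * c ≤ 0 := by
    have key := congrArg (shiftEval ψ 0)
      (sum_sq_smul_prod_aeval_bernsteinPolynomial (fun i => single (s i) 1) a N)
    have rhs : shiftEval ψ 0 (((N : ℝ) ^ 2) • (∑ i, a i • single (s i) 1) ^ 2 +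
        (N : ℝ) • ∑ i, a i ^ 2 • (single (s i) 1 - single (s i) 1 ^ 2)) =
        (N : ℝ) ^ 2 * Q + N * c := by
      simp [Q, c, sq, sum_mul, mul_sum, single_mul_single]
      exact sum_comm
    rw [← rhs, ← key, map_sum]
    refine sum_nonpos fun g hg => ?_
    rw [Fintype.mem_piFinset] at hg
    rw [map_smul, smul_eq_mul]
    by_cases hgN : ∃ k, g k ≠ N
    · exact mul_nonpos_of_nonneg_of_nonpos (sq_nonneg _)
        (shiftEval_prod_aeval_bernsteinPolynomial_nonpos hψ hs
          (fun k => Nat.lt_succ_iff.1 (mem_range.1 (hg k))) hgN)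
    · push Not at hgN
      simp [hgN, ← sum_mul, ha]
  by_contra! hQ
  obtain ⟨N, hN⟩ := exists_nat_gt (-c / Q)
  rw [div_lt_iff₀ hQ] at hN
  have := bound (N + 1)
  push_cast at this
  nlinarith

end Backward

theorem stmt_2 (ψ : ℝ → ℝ) (hbdd : ∃ m : ℝ, ∀ x : ℝ, 0 ≤ x → m ≤ ψ x) :
    NegDefHalfLine ψ ↔ ∀ n : ℕ, 1 ≤ n → NAlternating n ψ := by
  obtain ⟨m, hm⟩ := hbdd
  exact ⟨fun hψ _ hn => hψ.nAlternating hm hn, negDefHalfLine_of_nAlternating⟩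
end

section
/- Let ψ : [0,∞) → ℝ satisfy ψ(0) = 0 and be 1-, 2- and 3-alternating (as is every Bernstein function). Let R₁,…,R_d > 0, let K = ∏_{i=1}^d [−Rᵢ, Rᵢ] ⊂ ℝ^d with vertices v_A indexed by subsets A ⊆ {1,…,d}, and let C₀ : ℝ^d × ℝ^d → ℝ be a symmetric kernel with C₀(x, 0) = 0 for all x ∈ ℝ^d and C₀(x,x) − 2 C₀(x,y) + C₀(y,y) = ψ(‖x−y‖²) for all x, y ∈ ℝ^d. Define the modified kernel C(x,y) = C₀(x,y) − 2^{−d} Σ_{A ⊆ {1,…,d}} (C₀(x, v_A) + C₀(y, v_A)) + 2^{−2d} Σ_{A ⊆ {1,…,d}} Σ_{B ⊆ {1,…,d}} C₀(v_A, v_B). Then for every x ∈ K one has C(x,x) ≤ ψ(R₁² + ⋯ + R_d²); since C₀(y,y) = ψ(‖y‖²) on K and ψ is nondecreasing, the right-hand side equals sup_{y ∈ K} C₀(y,y). -/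
/-!
Write `γ h = ψ ‖h‖²`. The variogram identity alone turns `C x x` into
`2⁻ᵈ ∑_A γ(x - v_A) - 2⁻²ᵈ⁻¹ ∑_{A,B} γ(v_A - v_B)`, and the inner sum over `B` is
`∑_C ψ(∑_{i ∈ C} 4 Rᵢ²)` for every `A` (reindex by `B ↦ A ∆ B`). So it suffices to show
`∑_A ψ(s + ‖x - v_A‖²) ≤ 2ᵈ ψ(s + ∑ Rᵢ²) - 2ᵈ⁻¹ ψ s + ½ ∑_C ψ(s + ∑_{i ∈ C} 4 Rᵢ²)`
at `s = 0`. With the shift `s ≥ 0` free this tensorizes: adding one coordinate shifts `s`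
by `(xᵢ ∓ Rᵢ)²`, and
the induction step is an inequality between values of `ψ` at ten points of the line, which
follows from monotonicity (1-alternation) and antitone increments (2-alternation).
-/

open Finset
open scoped symmDiff

def boxVertex {ι : Type*} [DecidableEq ι] (R : ι → ℝ) (A : Finset ι) (i : ι) : ℝ :=
  if i ∈ A then R i else -R i

section boxVertex

variable {ι : Type*} [DecidableEq ι] {x R : ι → ℝ} {i : ι} {A T : Finset ι}

theorem sum_sq_sub_boxVertex_insert_of_subset (hi : i ∉ T) (hA : A ⊆ T) :
    ∑ j ∈ insert i T, (x j - boxVertex R A j) ^ 2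
      = (x i + R i) ^ 2 + ∑ j ∈ T, (x j - boxVertex R A j) ^ 2 := by
  rw [sum_insert hi, boxVertex, if_neg fun h => hi (hA h), sub_neg_eq_add]

theorem sum_sq_sub_boxVertex_insert_insert (hi : i ∉ T) :
    ∑ j ∈ insert i T, (x j - boxVertex R (insert i A) j) ^ 2
      = (x i - R i) ^ 2 + ∑ j ∈ T, (x j - boxVertex R A j) ^ 2 := by
  rw [sum_insert hi, boxVertex, if_pos (mem_insert_self i A)]
  congr 1
  refine sum_congr rfl fun j hj => ?_
  have hji : j ≠ i := ne_of_mem_of_not_mem hj hi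
  simp only [boxVertex, mem_insert, hji, false_or]

end boxVertex

theorem sum_sq_boxVertex_sub_boxVertex {ι : Type*} [Fintype ι] [DecidableEq ι] (R : ι → ℝ)
    (A B : Finset ι) :
    ∑ i, (boxVertex R A i - boxVertex R B i) ^ 2 = ∑ i ∈ A ∆ B, 4 * R i ^ 2 := by
  rw [← univ_inter (A ∆ B), ← sum_ite_mem]
  refine sum_congr rfl fun i _ => ?_
  by_cases hA : i ∈ A <;> by_cases hB : i ∈ B <;> simp [boxVertex, mem_symmDiff, hA, hB] <;> ring

theorem kernel_diag_sub_mean_eq {α ι : Type*} [Fintype ι] {K g : α → α → ℝ}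
    (hK : ∀ x y, K x x - 2 * K x y + K y y = g x y) (v : ι → α) {c : ℝ}
    (hc : c * Fintype.card ι = 1) (x : α) :
    K x x - c * ∑ a, (K x (v a) + K x (v a)) + c ^ 2 * ∑ a, ∑ b, K (v a) (v b)
      = c * ∑ a, g x (v a) - c ^ 2 / 2 * ∑ a, ∑ b, g (v a) (v b) := by
  have hcross : ∑ a, (K x (v a) + K x (v a)) = ∑ a, (K x x + K (v a) (v a) - g x (v a)) :=
    sum_congr rfl fun a _ => by linarith [hK x (v a)]
  have hvert : ∑ a, ∑ b, K (v a) (v b)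
      = ∑ a, ∑ b, (K (v a) (v a) + K (v b) (v b) - g (v a) (v b)) / 2 :=
    sum_congr rfl fun a _ => sum_congr rfl fun b _ => by linarith [hK (v a) (v b)]
  rw [hcross, hvert]
  simp only [← sum_div, sum_add_distrib, sum_sub_distrib, sum_const, card_univ, nsmul_eq_mul,
    ← mul_sum]
  linear_combination (c * ∑ a, K (v a) (v a) - K x x) * hc

namespace NAlternating

variable {ψ : ℝ → ℝ}

theorem monotoneOn (h : NAlternating 1 ψ) : MonotoneOn ψ (Set.Ici 0) := by
  intro x hx y _ hxy
  have key := h x hx (fun _ => y - x) (fun _ => sub_nonneg.2 hxy)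
  have e : (univ : Finset (Finset (Fin 1))) = {∅, {0}} := by decide
  rw [e, sum_pair (by decide)] at key
  simp only [card_empty, pow_zero, sum_empty, add_zero, one_mul, card_singleton, pow_one,
    sum_singleton, add_sub_cancel, neg_mul] at key
  linarith

theorem sub_le_sub_of_le (h : NAlternating 2 ψ) {y y' z z' : ℝ} (hy : 0 ≤ y) (hyz : y ≤ z)
    (hyy' : y ≤ y') (hz' : z' - z = y' - y) : ψ z' - ψ z ≤ ψ y' - ψ y := by
  have key := h y hy ![z - y, y' - y] (fun i => by fin_cases i <;> simp [hyz, hyy'])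
  have e : (univ : Finset (Finset (Fin 2))) = {∅, {0}, {1}, {0, 1}} := by decide
  rw [e, sum_insert (by decide), sum_insert (by decide), sum_pair (by decide)] at key
  simp only [card_empty, pow_zero, sum_empty, add_zero, one_mul, card_singleton, pow_one,
    sum_singleton, neg_mul, card_pair (show (0 : Fin 2) ≠ 1 by decide),
    sum_pair (show (0 : Fin 2) ≠ 1 by decide), Matrix.cons_val_zero, Matrix.cons_val_one] at key
  rw [show y + (z - y) = z by ring, show y + (y' - y) = y' by ring,
    show y + (z - y + (y' - y)) = z' by linarith] at key
  linarith

theorem pair_ineq (h1 : NAlternating 1 ψ) (h2 : NAlternating 2 ψ) {s m τ u w p : ℝ}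
    (hs : 0 ≤ s) (hm : 0 ≤ m) (hτ : 0 ≤ τ) (hu : 0 ≤ u) (hp : 2 * p ≤ u + w)
    (hp' : 3 * u + w ≤ 4 * p) :
    ψ (s + u + m) + ψ (s + w + m) + (ψ (s + u + τ) + ψ (s + w + τ)) / 2 ≤
      2 * ψ (s + p + m) + (ψ (s + u) + ψ (s + w)) / 2 - ψ s
        + (ψ (s + τ) + ψ (s + 4 * p + τ)) / 2 := by
  -- Pass through the reflection `2p - u` of `u` about `p`; `3u + w ≤ 4p` puts the midpoint of
  -- `s` and `s + w` below `s + (2p - u)`, and concavity there absorbs the excess `ψ (s + w)`.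
  have mono := h1.monotoneOn
  have hmid₁ := h2.sub_le_sub_of_le (y := s + u + m) (z := s + p + m) (y' := s + p + m)
    (z' := s + (2 * p - u) + m) (by positivity) (by linarith) (by linarith) (by ring)
  have hshift := h2.sub_le_sub_of_le (y := s + (2 * p - u)) (z := s + w)
    (y' := s + (2 * p - u) + m) (z' := s + w + m) (by linarith) (by linarith) (by linarith)
    (by ring)
  have hmid₂ := h2.sub_le_sub_of_le (y := s + (4 * p - 2 * u - w)) (z := s + (2 * p - u))
    (y' := s + (2 * p - u)) (z' := s + w) (by linarith) (by linarith) (by linarith) (by ring)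
  have hτu := h2.sub_le_sub_of_le (y := s) (z := s + τ) (y' := s + u) (z' := s + u + τ)
    hs (by linarith) (by linarith) (by ring)
  have hlow := mono (a := s) (b := s + (4 * p - 2 * u - w)) hs (Set.mem_Ici.2 (by linarith))
    (by linarith)
  have hhigh := mono (a := s + w + τ) (b := s + 4 * p + τ) (Set.mem_Ici.2 (by linarith))
    (Set.mem_Ici.2 (by linarith)) (by linarith)
  linarith

theorem pair_ineq_of_abs_le (h1 : NAlternating 1 ψ) (h2 : NAlternating 2 ψ) {s m τ x R : ℝ}
    (hs : 0 ≤ s) (hm : 0 ≤ m) (hτ : 0 ≤ τ) (hx : |x| ≤ R) :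
    ψ (s + (x - R) ^ 2 + m) + ψ (s + (x + R) ^ 2 + m)
        + (ψ (s + (x - R) ^ 2 + τ) + ψ (s + (x + R) ^ 2 + τ)) / 2 ≤
      2 * ψ (s + R ^ 2 + m) + (ψ (s + (x - R) ^ 2) + ψ (s + (x + R) ^ 2)) / 2 - ψ s
        + (ψ (s + τ) + ψ (s + 4 * R ^ 2 + τ)) / 2 := by
  obtain ⟨hxl, hxr⟩ := abs_le.1 hx
  rcases le_total 0 x with hx0 | hx0
  · exact pair_ineq h1 h2 hs hm hτ (sq_nonneg _) (by nlinarith) (by nlinarith)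
  · linarith [pair_ineq h1 h2 (u := (x + R) ^ 2) (w := (x - R) ^ 2) (p := R ^ 2)
      hs hm hτ (sq_nonneg _) (by nlinarith) (by nlinarith)]

theorem sum_powerset_vertex_le (h1 : NAlternating 1 ψ) (h2 : NAlternating 2 ψ) {ι : Type*} [DecidableEq ι] (x R : ι → ℝ) (T : Finset ι)
    (hx : ∀ i ∈ T, |x i| ≤ R i) {s : ℝ} (hs : 0 ≤ s) :
    ∑ A ∈ T.powerset, ψ (s + ∑ i ∈ T, (x i - boxVertex R A i) ^ 2) ≤
      2 ^ #T * ψ (s + ∑ i ∈ T, R i ^ 2) - 2 ^ #T / 2 * ψ s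
        + (∑ C ∈ T.powerset, ψ (s + ∑ i ∈ C, 4 * R i ^ 2)) / 2 := by
  induction T using Finset.induction_on generalizing s with
  | empty =>
    simp only [powerset_empty, sum_empty, add_zero, sum_singleton, card_empty, pow_zero]
    linarith
  | @insert i T hi ih =>
    have hxT : ∀ j ∈ T, |x j| ≤ R j := fun j hj => hx j (mem_insert_of_mem hj)
    have hxi := hx i (mem_insert_self i T)
    have ih_sub := ih hxT (s := s + (x i - R i) ^ 2) (by positivity)
    have ih_add := ih hxT (s := s + (x i + R i) ^ 2) (by positivity)
    have hpair : ∑ C ∈ T.powerset,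
        (ψ (s + (x i - R i) ^ 2 + ∑ j ∈ T, R j ^ 2) + ψ (s + (x i + R i) ^ 2 + ∑ j ∈ T, R j ^ 2)
          + (ψ (s + (x i - R i) ^ 2 + ∑ j ∈ C, 4 * R j ^ 2)
            + ψ (s + (x i + R i) ^ 2 + ∑ j ∈ C, 4 * R j ^ 2)) / 2) ≤
        ∑ C ∈ T.powerset,
          (2 * ψ (s + R i ^ 2 + ∑ j ∈ T, R j ^ 2)
            + (ψ (s + (x i - R i) ^ 2) + ψ (s + (x i + R i) ^ 2)) / 2 - ψ s
            + (ψ (s + ∑ j ∈ C, 4 * R j ^ 2) + ψ (s + 4 * R i ^ 2 + ∑ j ∈ C, 4 * R j ^ 2)) / 2) :=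
      sum_le_sum fun _ _ => h1.pair_ineq_of_abs_le h2 hs (sum_nonneg fun j _ => sq_nonneg (R j))
        (sum_nonneg fun j _ => by positivity) hxi
    have hout : ∑ A ∈ T.powerset, ψ (s + ∑ j ∈ insert i T, (x j - boxVertex R A j) ^ 2)
        = ∑ A ∈ T.powerset, ψ (s + (x i + R i) ^ 2 + ∑ j ∈ T, (x j - boxVertex R A j) ^ 2) :=
      sum_congr rfl fun A hA => by
        rw [sum_sq_sub_boxVertex_insert_of_subset hi (mem_powerset.1 hA), add_assoc]
    have hin : ∑ A ∈ T.powerset,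
          ψ (s + ∑ j ∈ insert i T, (x j - boxVertex R (insert i A) j) ^ 2)
        = ∑ A ∈ T.powerset, ψ (s + (x i - R i) ^ 2 + ∑ j ∈ T, (x j - boxVertex R A j) ^ 2) :=
      sum_congr rfl fun A _ => by rw [sum_sq_sub_boxVertex_insert_insert hi, add_assoc]
    have hcorner : ∑ C ∈ T.powerset, ψ (s + ∑ j ∈ insert i C, 4 * R j ^ 2)
        = ∑ C ∈ T.powerset, ψ (s + 4 * R i ^ 2 + ∑ j ∈ C, 4 * R j ^ 2) :=
      sum_congr rfl fun C hC => by
        rw [sum_insert fun h => hi (mem_powerset.1 hC h), add_assoc]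
    have hcard : (#T.powerset : ℝ) = 2 ^ #T := by simp
    simp only [sum_add_distrib, sum_sub_distrib, sum_const, nsmul_eq_mul, ← sum_div,
      hcard] at hpair
    rw [sum_powerset_insert hi, hout, hin, card_insert_of_notMem hi, sum_insert hi,
      sum_powerset_insert hi, hcorner, ← add_assoc, pow_succ (2 : ℝ)]
    linarith

end NAlternating

theorem stmt_4_general (d : ℕ) (ψ : ℝ → ℝ) (hψ0 : ψ 0 = 0)
    (h1 : NAlternating 1 ψ) (h2 : NAlternating 2 ψ)
    (R : Fin d → ℝ)
    (v : Finset (Fin d) → EuclideanSpace ℝ (Fin d))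
    (hv : ∀ (A : Finset (Fin d)) (i : Fin d), v A i = if i ∈ A then R i else -R i)
    (C₀ : EuclideanSpace ℝ (Fin d) → EuclideanSpace ℝ (Fin d) → ℝ)
    (hvario : ∀ x y, C₀ x x - 2 * C₀ x y + C₀ y y = ψ (‖x - y‖ ^ 2))
    (C : EuclideanSpace ℝ (Fin d) → EuclideanSpace ℝ (Fin d) → ℝ)
    (hC : ∀ x y, C x y = C₀ x y
      - (1 / 2 ^ d : ℝ) * ∑ A : Finset (Fin d), (C₀ x (v A) + C₀ y (v A))
      + (1 / 2 ^ (2 * d) : ℝ) *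
          ∑ A : Finset (Fin d), ∑ B : Finset (Fin d), C₀ (v A) (v B)) :
    ∀ x : EuclideanSpace ℝ (Fin d), (∀ i, |x i| ≤ R i) →
      C x x ≤ ψ (∑ i, R i ^ 2) := by
  intro x hx
  have hnorm : ∀ y z : EuclideanSpace ℝ (Fin d), ‖y - z‖ ^ 2 = ∑ i, (y i - z i) ^ 2 := by
    simp [EuclideanSpace.real_norm_sq_eq]
  have hv' : ∀ A i, v A i = boxVertex R A i := hv
  have hcorners : ∀ A, ∑ B, ψ (‖v A - v B‖ ^ 2) = ∑ B, ψ (∑ i ∈ B, 4 * R i ^ 2) := fun A => by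
    simp only [hnorm, hv', sum_sq_boxVertex_sub_boxVertex]
    exact Equiv.sum_comp ((symmDiff_right_involutive A).toPerm _)
      fun B => ψ (∑ i ∈ B, 4 * R i ^ 2)
  have hkey := h1.sum_powerset_vertex_le h2 x R univ (fun i _ => hx i) le_rfl
  simp only [zero_add, powerset_univ, card_univ, Fintype.card_fin, hψ0, mul_zero, sub_zero]
    at hkey
  have hc : (1 / 2 ^ d : ℝ) * Fintype.card (Finset (Fin d)) = 1 := by simp
  rw [hC, show (1 / 2 ^ (2 * d) : ℝ) = (1 / 2 ^ d) ^ 2 by ring,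
    kernel_diag_sub_mean_eq hvario v hc]
  simp only [hcorners, sum_const, card_univ, Fintype.card_finset, Fintype.card_fin,
    nsmul_eq_mul, Nat.cast_pow, Nat.cast_ofNat]
  simp only [hnorm, hv']
  field_simp
  linarith

theorem stmt_4 (d : ℕ) (ψ : ℝ → ℝ) (hψ0 : ψ 0 = 0)
    (h1 : NAlternating 1 ψ) (h2 : NAlternating 2 ψ) (h3 : NAlternating 3 ψ)
    (R : Fin d → ℝ) (hR : ∀ i, 0 < R i)
    (v : Finset (Fin d) → EuclideanSpace ℝ (Fin d))
    (hv : ∀ (A : Finset (Fin d)) (i : Fin d), v A i = if i ∈ A then R i else -R i)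
    (C₀ : EuclideanSpace ℝ (Fin d) → EuclideanSpace ℝ (Fin d) → ℝ)
    (hsym : ∀ x y, C₀ x y = C₀ y x)
    (h0 : ∀ x, C₀ x 0 = 0)
    (hvario : ∀ x y, C₀ x x - 2 * C₀ x y + C₀ y y = ψ (‖x - y‖ ^ 2))
    (C : EuclideanSpace ℝ (Fin d) → EuclideanSpace ℝ (Fin d) → ℝ)
    (hC : ∀ x y, C x y = C₀ x y
      - (1 / 2 ^ d : ℝ) * ∑ A : Finset (Fin d), (C₀ x (v A) + C₀ y (v A))
      + (1 / 2 ^ (2 * d) : ℝ) *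
          ∑ A : Finset (Fin d), ∑ B : Finset (Fin d), C₀ (v A) (v B)) :
    ∀ x : EuclideanSpace ℝ (Fin d), (∀ i, |x i| ≤ R i) →
      C x x ≤ ψ (∑ i, R i ^ 2) :=
  stmt_4_general d ψ hψ0 h1 h2 R v hv C₀ hvario C hC
end

section
/- Let ψ : [0,∞) → ℝ be 1- and 2-alternating. Then for all a ≥ 0 and all real numbers x, R with 0 ≤ x ≤ R one has ψ(a + (R − x)²) + ψ(a + (R + x)²) ≤ ψ(a + R²) + ψ(a + 3R²). -/
/-!
The squares `(R - x)² ≤ R² ≤ (R + x)²` have `(R - x)² + (R + x)² - R² = R² + 2x²`.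
Since 2-alternation says the increments of `ψ` shrink as the base point moves right,
`ψ(a + (R - x)²) + ψ(a + (R + x)²) ≤ ψ(a + R²) + ψ(a + R² + 2x²)`, and `R² + 2x² ≤ 3R²`
lets monotonicity finish.
-/

namespace NAlternating

variable {f : ℝ → ℝ}

theorem monotoneOn_Ici (h : NAlternating 1 f) : MonotoneOn f (Set.Ici 0) := by
  intro s hs u _ hsu
  have hsum := h s hs (fun _ => u - s) (fun _ => sub_nonneg.mpr hsu)
  have huniv : (Finset.univ : Finset (Finset (Fin 1))) = {∅, {0}} := by decide
  rw [huniv, Finset.sum_insert (by decide), Finset.sum_singleton] at hsum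
  simp only [Finset.card_empty, pow_zero, Finset.sum_empty, add_zero, one_mul,
    Finset.card_singleton, pow_one, Finset.sum_singleton, neg_one_mul, add_sub_cancel] at hsum
  linarith

theorem add_add_le_add (h : NAlternating 2 f) {s t₀ t₁ : ℝ}
    (hs : 0 ≤ s) (ht₀ : 0 ≤ t₀) (ht₁ : 0 ≤ t₁) :
    f s + f (s + t₀ + t₁) ≤ f (s + t₀) + f (s + t₁) := by
  have hsum := h s hs ![t₀, t₁] (by intro i; fin_cases i <;> assumption)
  have huniv : (Finset.univ : Finset (Finset (Fin 2))) = {∅, {0}, {1}, {0, 1}} := by decide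
  rw [huniv, Finset.sum_insert (by decide), Finset.sum_insert (by decide),
    Finset.sum_insert (by decide), Finset.sum_singleton] at hsum
  simp only [Finset.card_empty, pow_zero, Finset.sum_empty, add_zero, one_mul,
    Finset.card_singleton, pow_one, Matrix.cons_val_zero, neg_mul, Finset.sum_singleton,
    Matrix.cons_val_one, Matrix.cons_val_fin_one, Finset.mem_singleton, zero_ne_one,
    not_false_eq_true, Finset.card_insert_of_notMem, Nat.reduceAdd, even_two, Even.neg_pow,
    one_pow, Finset.sum_insert] at hsum
  rw [add_assoc s]
  linarith

theorem add_le_add_of_le (h : NAlternating 2 f) {p m q : ℝ}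
    (hp : 0 ≤ p) (hpm : p ≤ m) (hmq : m ≤ q) :
    f p + f q ≤ f m + f (p + q - m) := by
  have key := h.add_add_le_add hp (sub_nonneg.mpr hpm) (sub_nonneg.mpr hmq)
  rwa [add_sub_cancel, add_sub_cancel, ← add_sub_assoc] at key

end NAlternating

theorem stmt_10 (ψ : ℝ → ℝ) (h1 : NAlternating 1 ψ) (h2 : NAlternating 2 ψ)
    (a x R : ℝ) (ha : 0 ≤ a) (hx0 : 0 ≤ x) (hxR : x ≤ R) :
    ψ (a + (R - x) ^ 2) + ψ (a + (R + x) ^ 2) ≤ ψ (a + R ^ 2) + ψ (a + 3 * R ^ 2) := by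
  have hsub : ψ (a + (R - x) ^ 2) + ψ (a + (R + x) ^ 2) ≤
      ψ (a + R ^ 2) + ψ (a + R ^ 2 + 2 * x ^ 2) := by
    convert h2.add_le_add_of_le (p := a + (R - x) ^ 2) (m := a + R ^ 2)
      (q := a + (R + x) ^ 2) (by positivity) (by nlinarith) (by nlinarith) using 3
    ring
  have hmono : ψ (a + R ^ 2 + 2 * x ^ 2) ≤ ψ (a + 3 * R ^ 2) :=
    h1.monotoneOn_Ici (by positivity : (0 : ℝ) ≤ _) (by positivity : (0 : ℝ) ≤ _)
      (by nlinarith)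
  linarith
end

section
/- Let ψ : [0,∞) → ℝ be 2- and 3-alternating with ψ(0) = 0. Then for all a, b ≥ 0 one has ψ(3a + b) − (1/2) ψ(4a) ≤ ψ(a + b). -/
/-!
With Mathlib's forward difference `Δ_[h] f x = f (x + h) - f x` (the negative of the paper's
`Δ_h`), the alternating sum with steps `t₁, …, tₙ` at `s` is `(-1)ⁿ Δ_[tₙ] ⋯ Δ_[t₁] f s`:
2-alternation makes second differences nonpositive and 3-alternation makes third differences
nonnegative. When `ψ 0 = 0`, the defect `ψ (3a + b) - ψ (4a) / 2 - ψ (a + b)` equals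
`Δ_[2a] Δ_[b] ψ a - (1/2) Δ_[2a] Δ_[a] Δ_[a] ψ 0`, a sum of two nonpositive terms.
-/

open Finset fwdDiff

theorem Fin.sum_finset_succ {n : ℕ} {β : Type*} [AddCommMonoid β] (g : Finset (Fin (n + 1)) → β) :
    ∑ A, g A = ∑ B : Finset (Fin n), (g (B.image Fin.succ) + g (insert 0 (B.image Fin.succ))) := by
  have huniv : (univ : Finset (Fin (n + 1))) = insert 0 (univ.image Fin.succ) := by
    rw [Fin.univ_succ, cons_eq_insert, map_eq_image]
    rfl
  have h0 : (0 : Fin (n + 1)) ∉ univ.image Fin.succ := by simp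
  have hinj := image_injOn_powerset_of_injOn (s := (univ : Finset (Fin n)))
    (Fin.succ_injective n).injOn
  rw [← powerset_univ, huniv, sum_powerset_insert h0, powerset_image, sum_image hinj,
    sum_image hinj, ← sum_add_distrib, powerset_univ]

namespace NAlternating

def altSum {n : ℕ} (f : ℝ → ℝ) (s : ℝ) (t : Fin n → ℝ) : ℝ :=
  ∑ A : Finset (Fin n), (-1 : ℝ) ^ A.card * f (s + ∑ i ∈ A, t i)

theorem altSum_zero (f : ℝ → ℝ) (s : ℝ) (t : Fin 0 → ℝ) : altSum f s t = f s := by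
  rw [altSum, Fintype.sum_subsingleton _ ∅]
  simp

theorem altSum_succ {n : ℕ} (f : ℝ → ℝ) (s : ℝ) (t : Fin (n + 1) → ℝ) :
    altSum f s t = -altSum (Δ_[t 0] f) s (Fin.tail t) := by
  rw [altSum, altSum, Fin.sum_finset_succ, ← sum_neg_distrib]
  refine sum_congr rfl fun B _ => ?_
  have h0 : (0 : Fin (n + 1)) ∉ B.image Fin.succ := by simp
  rw [sum_insert h0, card_insert_of_notMem h0, card_image_of_injective _ (Fin.succ_injective n),
    sum_image (Fin.succ_injective n).injOn, fwdDiff, pow_succ]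
  simp only [Fin.tail]
  rw [add_comm (t 0), ← add_assoc]
  ring

theorem altSum_two (f : ℝ → ℝ) (s t₁ t₂ : ℝ) : altSum f s ![t₁, t₂] = Δ_[t₂] (Δ_[t₁] f) s := by
  simp [altSum_succ, altSum_zero]

theorem altSum_three (f : ℝ → ℝ) (s t₁ t₂ t₃ : ℝ) :
    altSum f s ![t₁, t₂, t₃] = -Δ_[t₃] (Δ_[t₂] (Δ_[t₁] f)) s := by
  simp [altSum_succ, altSum_zero]

variable {f : ℝ → ℝ} {s t₁ t₂ t₃ : ℝ}

theorem fwdDiff_fwdDiff_nonpos (hf : NAlternating 2 f) (hs : 0 ≤ s) (h₁ : 0 ≤ t₁) (h₂ : 0 ≤ t₂) :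
    Δ_[t₂] (Δ_[t₁] f) s ≤ 0 := by
  rw [← altSum_two]
  exact hf s hs _ (by simp [Fin.forall_fin_succ, *])

theorem fwdDiff_fwdDiff_fwdDiff_nonneg (hf : NAlternating 3 f) (hs : 0 ≤ s) (h₁ : 0 ≤ t₁)
    (h₂ : 0 ≤ t₂) (h₃ : 0 ≤ t₃) : 0 ≤ Δ_[t₃] (Δ_[t₂] (Δ_[t₁] f)) s := by
  rw [← neg_nonpos, ← altSum_three]
  exact hf s hs _ (by simp [Fin.forall_fin_succ, *])

end NAlternating

theorem stmt_12 (ψ : ℝ → ℝ) (h2 : NAlternating 2 ψ) (h3 : NAlternating 3 ψ)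
    (hψ0 : ψ 0 = 0) (a b : ℝ) (ha : 0 ≤ a) (hb : 0 ≤ b) :
    ψ (3 * a + b) - (1 / 2) * ψ (4 * a) ≤ ψ (a + b) := by
  have h2a : 0 ≤ 2 * a := by positivity
  have hsecond := h2.fwdDiff_fwdDiff_nonpos ha hb h2a
  have hthird := h3.fwdDiff_fwdDiff_fwdDiff_nonneg le_rfl ha ha h2a
  have key : ψ (3 * a + b) - (1 / 2) * ψ (4 * a) - ψ (a + b) =
      Δ_[2 * a] (Δ_[b] ψ) a - (1 / 2) * Δ_[2 * a] (Δ_[a] (Δ_[a] ψ)) 0 := by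
    simp only [fwdDiff, zero_add, hψ0]
    ring_nf
  linarith
end
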